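/- arXiv:2402.10557 — 2 statements merged into one kernel-verified Lean document; each statement's English description precedes it below -/
import Mathlib

section
/- Let M₁, M₂ be complex matrices of sizes n₁×n₁ and n₂×n₂, E₁, E₂ matrices of sizes n₁×m and n₂×m, and ρ₁₂, ρ₂₁ ∈ ℂ. If λ ∈ ℂ is such that λ·I − M₁ and λ·I − M₂ are invertible, then det of the block matrix [[λI−M₁, −ρ₁₂ E₁E₂ᵀ], [−ρ₂₁ E₂E₁ᵀ, λI−M₂]] equals det(λI−M₁)·det(λI−M₂)·det(I_m − ρ₁₂ρ₂₁ Γ₁ Γ₂), where Γ_i = E_iᵀ (λI − M_i)⁻¹ E_i. -/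
open Matrix

namespace Matrix

variable {R n₁ n₂ m : Type*} [CommRing R] [Fintype n₁] [Fintype n₂] [Fintype m]
  [DecidableEq n₁] [DecidableEq n₂]

theorem det_fromBlocks_eq_det_mul_det_mul_det_one_sub (A : Matrix n₁ n₁ R) (B : Matrix n₁ n₂ R)
    (C : Matrix n₂ n₁ R) (D : Matrix n₂ n₂ R) (hA : IsUnit A.det) (hD : IsUnit D.det) :
    (fromBlocks A B C D).det = A.det * D.det * (1 - D⁻¹ * C * A⁻¹ * B).det := by
  have := A.invertibleOfIsUnitDet hA
  have schur : D - C * A⁻¹ * B = D * (1 - D⁻¹ * C * A⁻¹ * B) := by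
    simp only [Matrix.mul_sub, Matrix.mul_one, Matrix.mul_assoc, mul_nonsing_inv_cancel_left _ _ hD]
  rw [det_fromBlocks₁₁, invOf_eq_nonsing_inv, schur, det_mul, mul_assoc]

variable [DecidableEq m]

/-- Schur complement, then Sylvester's identity `det (1 - XY) = det (1 - YX)` to pass from
`n₂ × n₂` to `m × m`. -/
theorem det_fromBlocks_neg_smul_mul (A : Matrix n₁ n₁ R) (D : Matrix n₂ n₂ R)
    (U₁ : Matrix n₁ m R) (V₁ : Matrix m n₁ R) (U₂ : Matrix n₂ m R) (V₂ : Matrix m n₂ R) (a b : R)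
    (hA : IsUnit A.det) (hD : IsUnit D.det) :
    (fromBlocks A (-(a • (U₁ * V₂))) (-(b • (U₂ * V₁))) D).det =
      A.det * D.det * (1 - (a * b) • ((V₁ * A⁻¹ * U₁) * (V₂ * D⁻¹ * U₂))).det := by
  have factor : D⁻¹ * -(b • (U₂ * V₁)) * A⁻¹ * -(a • (U₁ * V₂)) =
      (D⁻¹ * U₂) * ((a * b) • (V₁ * A⁻¹ * U₁ * V₂)) := by
    simp only [Matrix.neg_mul, Matrix.mul_neg, Matrix.smul_mul, Matrix.mul_smul, smul_neg, neg_neg,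
      smul_smul, Matrix.mul_assoc]
  rw [det_fromBlocks_eq_det_mul_det_mul_det_one_sub _ _ _ _ hA hD, factor,
    det_one_sub_mul_comm]
  simp only [Matrix.smul_mul, Matrix.mul_assoc]

end Matrix

theorem stmt7 (n₁ n₂ m : ℕ)
    (M₁ : Matrix (Fin n₁) (Fin n₁) ℂ) (M₂ : Matrix (Fin n₂) (Fin n₂) ℂ)
    (E₁ : Matrix (Fin n₁) (Fin m) ℂ) (E₂ : Matrix (Fin n₂) (Fin m) ℂ)
    (ρ₁₂ ρ₂₁ : ℂ) (lam : ℂ)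
    (h₁ : IsUnit (lam • (1 : Matrix (Fin n₁) (Fin n₁) ℂ) - M₁).det)
    (h₂ : IsUnit (lam • (1 : Matrix (Fin n₂) (Fin n₂) ℂ) - M₂).det) :
    (Matrix.fromBlocks (lam • 1 - M₁) (-(ρ₁₂ • (E₁ * E₂ᵀ)))
        (-(ρ₂₁ • (E₂ * E₁ᵀ))) (lam • 1 - M₂)).det =
      (lam • (1 : Matrix (Fin n₁) (Fin n₁) ℂ) - M₁).det *
        (lam • (1 : Matrix (Fin n₂) (Fin n₂) ℂ) - M₂).det *
        (1 - (ρ₁₂ * ρ₂₁) •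
            ((E₁ᵀ * (lam • 1 - M₁)⁻¹ * E₁) * (E₂ᵀ * (lam • 1 - M₂)⁻¹ * E₂))).det :=
  det_fromBlocks_neg_smul_mul _ _ E₁ E₁ᵀ E₂ E₂ᵀ ρ₁₂ ρ₂₁ h₁ h₂
end

section
/- Let M₁, M₂ be real symmetric matrices of sizes n₁, n₂ and E₁, E₂ indexing matrices of sizes n₁×m, n₂×m. If λ is an eigenvalue of M₁ with multiplicity d (dimension of eigenspace) and every eigenvector of M₁ for λ is orthogonal to the columns of E₁ (λ is E₁-non-main), then λ is an eigenvalue of the symmetric block matrix B = [[M₁, E₁E₂ᵀ], [E₂E₁ᵀ, M₂]] with multiplicity at least d. -/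
/-!
Extending a λ-eigenvector `v` of `M₁` by zero gives `B (v, 0) = (M₁ v, E₂ (E₁ᵀ v)) = (λ v, 0)`,
because `λ` is `E₁`-non-main. This embeds the λ-eigenspace of `M₁` injectively into that of `B`.
-/

open Matrix

namespace Matrix

variable {K : Type*} [Field K] {l m n o : Type*}

theorem fromBlocks_sub_smul_one [DecidableEq l] [DecidableEq m] (A : Matrix l l K)
    (B : Matrix l m K) (C : Matrix m l K) (D : Matrix m m K) (c : K) :
    fromBlocks A B C D - c • 1 = fromBlocks (A - c • 1) B C (D - c • 1) := by
  rw [← fromBlocks_one, fromBlocks_smul, sub_eq_add_neg, fromBlocks_neg, fromBlocks_add]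
  simp only [smul_zero, neg_zero, add_zero, ← sub_eq_add_neg]

theorem finrank_ker_mulVecLin_le_fromBlocks [Fintype l] [Fintype m] [Finite n] [Finite o]
    {A : Matrix n l K} (B : Matrix n m K) {C : Matrix o l K} (D : Matrix o m K)
    (hC : ∀ v ∈ LinearMap.ker A.mulVecLin, C *ᵥ v = 0) :
    Module.finrank K (LinearMap.ker A.mulVecLin) ≤
      Module.finrank K (LinearMap.ker (fromBlocks A B C D).mulVecLin) := by
  let extendByZero : (l → K) →ₗ[K] (l ⊕ m → K) :=
    (LinearEquiv.sumArrowLequivProdArrow l m K K).symm.toLinearMap ∘ₗ LinearMap.inl K _ _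
  have hker : ∀ v ∈ LinearMap.ker A.mulVecLin,
      extendByZero v ∈ LinearMap.ker (fromBlocks A B C D).mulVecLin := by
    intro v hv
    have hAv : A *ᵥ v = 0 := hv
    show fromBlocks A B C D *ᵥ Sum.elim v 0 = 0
    rw [fromBlocks_mulVec, Sum.elim_comp_inl, Sum.elim_comp_inr, hAv, hC v hv, mulVec_zero,
      mulVec_zero, add_zero, add_zero, Sum.elim_zero_zero]
  have hinj : Function.Injective extendByZero := by
    rw [LinearMap.coe_comp]
    exact (LinearEquiv.injective _).comp LinearMap.inl_injective
  exact LinearMap.finrank_le_finrank_of_injective (f := extendByZero.restrict hker)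
    fun v w h ↦ Subtype.ext (hinj (congrArg Subtype.val h))

end Matrix

theorem stmt18_general (n₁ n₂ m d : ℕ)
    (M₁ : Matrix (Fin n₁) (Fin n₁) ℝ)
    (M₂ : Matrix (Fin n₂) (Fin n₂) ℝ)
    (E₁ : Matrix (Fin n₁) (Fin m) ℝ) (E₂ : Matrix (Fin n₂) (Fin m) ℝ)
    (lam : ℝ)
    (hd : Module.finrank ℝ
      (LinearMap.ker ((M₁ - lam • (1 : Matrix (Fin n₁) (Fin n₁) ℝ)).mulVecLin)) = d)
    (hnonmain : ∀ v : Fin n₁ → ℝ, M₁.mulVec v = lam • v → E₁ᵀ.mulVec v = 0) :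
    d ≤ Module.finrank ℝ
      (LinearMap.ker ((Matrix.fromBlocks M₁ (E₁ * E₂ᵀ) (E₂ * E₁ᵀ) M₂ -
        lam • (1 : Matrix (Fin n₁ ⊕ Fin n₂) (Fin n₁ ⊕ Fin n₂) ℝ)).mulVecLin)) := by
  rw [← hd, fromBlocks_sub_smul_one]
  refine finrank_ker_mulVecLin_le_fromBlocks _ _ fun v hv ↦ ?_
  have hMv : M₁ *ᵥ v = lam • v := by
    rwa [LinearMap.mem_ker, mulVecLin_apply, sub_mulVec, smul_mulVec, one_mulVec,
      sub_eq_zero] at hv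
  rw [← mulVec_mulVec, hnonmain v hMv, mulVec_zero]

theorem stmt18 (n₁ n₂ m d : ℕ)
    (M₁ : Matrix (Fin n₁) (Fin n₁) ℝ) (hM₁ : M₁.IsSymm)
    (M₂ : Matrix (Fin n₂) (Fin n₂) ℝ) (hM₂ : M₂.IsSymm)
    (E₁ : Matrix (Fin n₁) (Fin m) ℝ) (E₂ : Matrix (Fin n₂) (Fin m) ℝ)
    (lam : ℝ)
    (hd : Module.finrank ℝ
      (LinearMap.ker ((M₁ - lam • (1 : Matrix (Fin n₁) (Fin n₁) ℝ)).mulVecLin)) = d)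
    (hdpos : 0 < d)
    (hnonmain : ∀ v : Fin n₁ → ℝ, M₁.mulVec v = lam • v → E₁ᵀ.mulVec v = 0) :
    d ≤ Module.finrank ℝ
      (LinearMap.ker ((Matrix.fromBlocks M₁ (E₁ * E₂ᵀ) (E₂ * E₁ᵀ) M₂ -
        lam • (1 : Matrix (Fin n₁ ⊕ Fin n₂) (Fin n₁ ⊕ Fin n₂) ℝ)).mulVecLin)) :=
  stmt18_general n₁ n₂ m d M₁ M₂ E₁ E₂ lam hd hnonmain
end
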